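/- For every θ ∈ [0, π], the definite integral ∫_{−(π−θ)/2}^{(π−θ)/2} cos²(β + θ/2)·cos²(β − θ/2) dβ equals (1/8)·[(π − θ)·(2 + cos(2θ)) + (3/2)·sin(2θ)]. -/

import Mathlib

/-! By the product-to-sum formula, `cos (β + θ/2) * cos (β - θ/2) = (cos 2β + cos θ) / 2`, so the
integrand is a trigonometric polynomial in `β` with an explicit antiderivative; evaluating it at
`±(π - θ)/2` gives the closed form. -/

open Real

lemma cos_add_half_sq_mul_cos_sub_half_sq (β θ : ℝ) :
    cos (β + θ / 2) ^ 2 * cos (β - θ / 2) ^ 2 = (cos (2 * β) + cos θ) ^ 2 / 4 := by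
  have h := cos_add_cos (2 * β) θ
  rw [show (2 * β + θ) / 2 = β + θ / 2 by ring, show (2 * β - θ) / 2 = β - θ / 2 by ring] at h
  rw [h]
  ring

lemma hasDerivAt_cos_two_mul_add_sq_antideriv (c β : ℝ) :
    HasDerivAt (fun x => (1 / 2 + c ^ 2) * x + sin (4 * x) / 8 + c * sin (2 * x))
      ((cos (2 * β) + c) ^ 2) β := by
  have h := (((hasDerivAt_id' β).const_mul (1 / 2 + c ^ 2)).add
    (((hasDerivAt_id' β).const_mul 4).sin.div_const 8)).add
    (((hasDerivAt_id' β).const_mul 2).sin.const_mul c)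
  refine h.congr_deriv ?_
  rw [show 4 * β = 2 * (2 * β) by ring, cos_two_mul]
  ring

lemma integral_cos_two_mul_add_sq (c L : ℝ) :
    ∫ β in -L..L, (cos (2 * β) + c) ^ 2 =
      (1 + 2 * c ^ 2) * L + sin (4 * L) / 4 + 2 * c * sin (2 * L) := by
  rw [intervalIntegral.integral_eq_sub_of_hasDerivAt
    (fun β _ => hasDerivAt_cos_two_mul_add_sq_antideriv c β)
    (Continuous.intervalIntegrable (by fun_prop) _ _)]
  simp only [mul_neg, sin_neg]
  ring

theorem stmt18_general (θ : ℝ) :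
    (∫ β in (-((π - θ) / 2))..((π - θ) / 2),
        Real.cos (β + θ / 2) ^ 2 * Real.cos (β - θ / 2) ^ 2) =
      (1 / 8) * ((π - θ) * (2 + Real.cos (2 * θ)) + (3 / 2) * Real.sin (2 * θ)) := by
  simp_rw [cos_add_half_sq_mul_cos_sub_half_sq]
  rw [intervalIntegral.integral_div, integral_cos_two_mul_add_sq,
    show 4 * ((π - θ) / 2) = -(2 * θ) + 2 * π by ring, sin_add_two_pi, sin_neg,
    show 2 * ((π - θ) / 2) = π - θ by ring, sin_pi_sub, sin_two_mul, cos_two_mul]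
  ring

/-- For every `θ ∈ [0, π]`,
`∫_{−(π−θ)/2}^{(π−θ)/2} cos²(β + θ/2) cos²(β − θ/2) dβ
  = (1/8) [(π − θ)(2 + cos(2θ)) + (3/2) sin(2θ)]`. -/
theorem stmt18 (θ : ℝ) (h0 : 0 ≤ θ) (h1 : θ ≤ π) :
    (∫ β in (-((π - θ) / 2))..((π - θ) / 2),
        Real.cos (β + θ / 2) ^ 2 * Real.cos (β - θ / 2) ^ 2) =
      (1 / 8) * ((π - θ) * (2 + Real.cos (2 * θ)) + (3 / 2) * Real.sin (2 * θ)) :=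
  stmt18_general θ
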